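/- Let $F:\mathbb{R}^d\to\mathbb{R}$ be convex and $\beta$-smooth on a closed convex set $\Gamma$, let $w,w^*\in\Gamma$, let $g\in\mathbb{R}^d$, let $0<\eta<1/\beta$ and $w^+ = \Pi_\Gamma[w-\eta g]$. Then $F(w^+) \le F(w) + g^\top(w^* - w) + \tfrac{1}{2\eta}\big(\|w-w^*\|_2^2 - \|w^+-w^*\|_2^2\big) + \tfrac{\eta}{2(1-\eta\beta)}\|\nabla F(w) - g\|_2^2$. -/

import Mathlib

/-!
By the descent lemma, `F wplus` lies below the quadratic model of `F` at `w`. Write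
`⟪∇F w, wplus - w⟫ = ⟪g, wstar - w⟫ + ⟪g, wplus - wstar⟫ + ⟪∇F w - g, wplus - w⟫`. The variational
inequality of the projection, tested at `wstar` and expanded by the polarization identity, bounds
the middle term by `(‖w - wstar‖² - ‖w - wplus‖² - ‖wplus - wstar‖²) / (2η)`; Young's inequality
with weight `η / (1 - ηβ)` bounds the last one. That weight is chosen so that the three
`‖wplus - w‖²` terms cancel.
-/

open RealInnerProductSpace

variable {E : Type*} [NormedAddCommGroup E] [InnerProductSpace ℝ E]

theorem HasGradientAt.hasDerivAt_add_smul [CompleteSpace E] {F : E → ℝ} {g x v : E} {t : ℝ}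
    (h : HasGradientAt F g (x + t • v)) :
    HasDerivAt (fun s : ℝ => F (x + s • v)) ⟪g, v⟫ t := by
  have hline : HasDerivAt (fun s : ℝ => x + s • v) v t := by
    simpa using ((hasDerivAt_id' t).smul_const v).const_add x
  exact h.hasFDerivAt.comp_hasDerivAt t hline

theorem real_inner_le_mul_mul_sq_of_norm_le {u v : E} {β t : ℝ} (ht : 0 ≤ t)
    (hu : ‖u‖ ≤ β * ‖t • v‖) : ⟪u, v⟫ ≤ β * t * ‖v‖ ^ 2 := by
  rw [norm_smul, Real.norm_of_nonneg ht] at hu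
  calc ⟪u, v⟫ ≤ ‖u‖ * ‖v‖ := real_inner_le_norm u v
    _ ≤ β * (t * ‖v‖) * ‖v‖ := by gcongr
    _ = β * t * ‖v‖ ^ 2 := by ring

theorem Convex.le_add_inner_add_sq_of_lipschitz_gradient [CompleteSpace E] {Γ : Set E}
    (hΓ : Convex ℝ Γ) {F : E → ℝ} {gradF : E → E} {β : ℝ}
    (hF : ∀ x ∈ Γ, HasGradientAt F (gradF x) x)
    (hlip : ∀ x ∈ Γ, ∀ y ∈ Γ, ‖gradF x - gradF y‖ ≤ β * ‖x - y‖)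
    {x y : E} (hx : x ∈ Γ) (hy : y ∈ Γ) :
    F y ≤ F x + ⟪gradF x, y - x⟫ + β / 2 * ‖y - x‖ ^ 2 := by
  set v := y - x
  have hseg : ∀ t ∈ Set.Icc (0 : ℝ) 1, x + t • v ∈ Γ := fun t ht => hΓ.add_smul_sub_mem hx hy ht
  set φ : ℝ → ℝ := fun t => F (x + t • v) - t * ⟪gradF x, v⟫ - β / 2 * t ^ 2 * ‖v‖ ^ 2
  have hφ : ∀ t ∈ Set.Icc (0 : ℝ) 1,
      HasDerivAt φ (⟪gradF (x + t • v) - gradF x, v⟫ - β * t * ‖v‖ ^ 2) t := by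
    intro t ht
    have hquad : HasDerivAt (fun t : ℝ => β / 2 * t ^ 2 * ‖v‖ ^ 2) (β * t * ‖v‖ ^ 2) t := by
      refine (((hasDerivAt_pow 2 t).const_mul (β / 2)).mul_const (‖v‖ ^ 2)).congr_deriv ?_
      simp only [Nat.cast_ofNat, Nat.add_one_sub_one, pow_one]
      ring
    refine ((((hF _ (hseg t ht)).hasDerivAt_add_smul).sub
      ((hasDerivAt_id' t).mul_const ⟪gradF x, v⟫)).sub hquad).congr_deriv ?_
    rw [inner_sub_left, one_mul]
  have hanti : AntitoneOn φ (Set.Icc 0 1) := by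
    refine antitoneOn_of_hasDerivWithinAt_nonpos (convex_Icc 0 1)
      (fun t ht => (hφ t ht).continuousAt.continuousWithinAt)
      (fun t ht => (hφ t (interior_subset ht)).hasDerivWithinAt) fun t ht => ?_
    rw [interior_Icc] at ht
    have hlip_t := hlip _ (hseg t (Set.Ioo_subset_Icc_self ht)) x hx
    rw [add_sub_cancel_left] at hlip_t
    linarith [real_inner_le_mul_mul_sq_of_norm_le ht.1.le hlip_t]
  have h01 := hanti (Set.left_mem_Icc.2 zero_le_one) (Set.right_mem_Icc.2 zero_le_one) zero_le_one
  simp only [φ, v, one_smul, add_sub_cancel, zero_smul, add_zero] at h01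
  linarith

theorem real_inner_le_of_inner_sub_proj_nonpos {w g p z : E} {η : ℝ} (hη : 0 < η)
    (hp : ⟪z - p, (w - η • g) - p⟫ ≤ 0) :
    ⟪g, p - z⟫ ≤ 1 / (2 * η) * (‖w - z‖ ^ 2 - ‖w - p‖ ^ 2 - ‖p - z‖ ^ 2) := by
  have hexpand : ‖w - z‖ ^ 2 = ‖w - p‖ ^ 2 - 2 * ⟪w - p, z - p⟫ + ‖z - p‖ ^ 2 := by
    rw [← norm_sub_sq_real, sub_sub_sub_cancel_right]
  rw [sub_right_comm, inner_sub_right, inner_smul_right, real_inner_comm] at hp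
  rw [hexpand, norm_sub_rev p z, ← neg_sub z p, inner_neg_right, real_inner_comm (z - p) g,
    one_div, inv_mul_eq_div, le_div_iff₀ (by positivity)]
  linarith

theorem real_inner_le_young {u v : E} {c : ℝ} (hc : 0 < c) :
    ⟪u, v⟫ ≤ c / 2 * ‖u‖ ^ 2 + 1 / (2 * c) * ‖v‖ ^ 2 := by
  have h := norm_sub_sq_real (c • u) v
  rw [norm_smul, Real.norm_of_nonneg hc.le, real_inner_smul_left] at h
  rw [div_mul_eq_mul_div, one_div_mul_eq_div, div_add_div _ _ two_ne_zero (by positivity),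
    le_div_iff₀ (by positivity)]
  nlinarith [sq_nonneg ‖c • u - v‖]

theorem mul_lt_one_of_lt_one_div {η β : ℝ} (hη0 : 0 < η) (hη : η < 1 / β) : η * β < 1 := by
  rcases le_or_gt β 0 with hβ | hβ
  · linarith [mul_nonpos_of_nonneg_of_nonpos hη0.le hβ]
  · exact (lt_div_iff₀ hβ).mp hη

theorem projected_sgd_descent_inequality_general
    {d : ℕ} (Γ : Set (EuclideanSpace ℝ (Fin d)))
    (hconv : Convex ℝ Γ)
    (F : EuclideanSpace ℝ (Fin d) → ℝ)
    (gradF : EuclideanSpace ℝ (Fin d) → EuclideanSpace ℝ (Fin d))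
    (β : ℝ)
    (hFgrad : ∀ x ∈ Γ, HasGradientAt F (gradF x) x)
    (hFsmooth : ∀ x ∈ Γ, ∀ y ∈ Γ, ‖gradF x - gradF y‖ ≤ β * ‖x - y‖)
    (w wstar : EuclideanSpace ℝ (Fin d)) (hw : w ∈ Γ) (hws : wstar ∈ Γ)
    (g : EuclideanSpace ℝ (Fin d))
    (η : ℝ) (hη0 : 0 < η) (hη : η < 1 / β)
    (wplus : EuclideanSpace ℝ (Fin d)) (hmem : wplus ∈ Γ)
    (hproj : ∀ z ∈ Γ, ⟪z - wplus, (w - η • g) - wplus⟫ ≤ (0 : ℝ)) :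
    F wplus ≤ F w + ⟪g, wstar - w⟫
        + (1 / (2 * η)) * (‖w - wstar‖ ^ 2 - ‖wplus - wstar‖ ^ 2)
        + (η / (2 * (1 - η * β))) * ‖gradF w - g‖ ^ 2 := by
  have hstep : 0 < 1 - η * β := sub_pos.2 (mul_lt_one_of_lt_one_div hη0 hη)
  have hdescent := hconv.le_add_inner_add_sq_of_lipschitz_gradient hFgrad hFsmooth hw hmem
  have hsplit : ⟪gradF w, wplus - w⟫
      = ⟪g, wstar - w⟫ + ⟪g, wplus - wstar⟫ + ⟪gradF w - g, wplus - w⟫ := by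
    rw [← inner_add_right, sub_add_sub_cancel', inner_sub_left]
    ring
  have hprox := real_inner_le_of_inner_sub_proj_nonpos hη0 (hproj wstar hws)
  have hyoung := real_inner_le_young (u := gradF w - g) (v := wplus - w) (div_pos hη0 hstep)
  rw [norm_sub_rev w wplus] at hprox
  have hcoeff : η / (1 - η * β) / 2 = η / (2 * (1 - η * β)) := by
    rw [div_div, mul_comm]
  have hcancel : 1 / (2 * (η / (1 - η * β))) + β / 2 = 1 / (2 * η) := by
    field_simp
    ring
  rw [hcoeff] at hyoung
  linear_combination hdescent + hsplit + hprox + hyoung + ‖wplus - w‖ ^ 2 * hcancel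

/-- Per-step descent inequality for projected SGD with an inexact gradient `g`:
if `F` is convex and `β`-smooth on the closed convex set `Γ`, `0 < η < 1/β`, and
`wplus` is the Euclidean projection of `w - η • g` onto `Γ`, then
`F(wplus) ≤ F(w) + ⟪g, w* - w⟫ + (1/(2η))(‖w-w*‖² - ‖wplus-w*‖²)
            + (η/(2(1-ηβ))) ‖∇F(w) - g‖²`. -/
theorem projected_sgd_descent_inequality
    {d : ℕ} (Γ : Set (EuclideanSpace ℝ (Fin d)))
    (hne : Γ.Nonempty) (hclosed : IsClosed Γ) (hconv : Convex ℝ Γ)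
    (F : EuclideanSpace ℝ (Fin d) → ℝ)
    (gradF : EuclideanSpace ℝ (Fin d) → EuclideanSpace ℝ (Fin d))
    (β : ℝ) (hβ : 0 < β)
    (hFconv : ConvexOn ℝ Γ F)
    (hFgrad : ∀ x ∈ Γ, HasGradientAt F (gradF x) x)
    (hFsmooth : ∀ x ∈ Γ, ∀ y ∈ Γ, ‖gradF x - gradF y‖ ≤ β * ‖x - y‖)
    (w wstar : EuclideanSpace ℝ (Fin d)) (hw : w ∈ Γ) (hws : wstar ∈ Γ)
    (g : EuclideanSpace ℝ (Fin d))
    (η : ℝ) (hη0 : 0 < η) (hη : η < 1 / β)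
    (wplus : EuclideanSpace ℝ (Fin d)) (hmem : wplus ∈ Γ)
    (hproj : ∀ z ∈ Γ, ⟪z - wplus, (w - η • g) - wplus⟫ ≤ (0 : ℝ)) :
    F wplus ≤ F w + ⟪g, wstar - w⟫
        + (1 / (2 * η)) * (‖w - wstar‖ ^ 2 - ‖wplus - wstar‖ ^ 2)
        + (η / (2 * (1 - η * β))) * ‖gradF w - g‖ ^ 2 :=
  projected_sgd_descent_inequality_general Γ hconv F gradF β hFgrad hFsmooth w wstar hw hws g η hη0
    hη wplus hmem hproj
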